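/- arXiv:1611.08632 — 5 statements merged into one kernel-verified Lean document; each statement's English description precedes it below -/
import Mathlib

section
/- (Theorem 1, noise representation for high indices.) If in addition the correlation between Y and X is r-dimensional, i.e. λ_{r+1} = 0 in the singular value decomposition of the cross-covariance kernel Σ, and the noise is uncorrelated with the regressor, i.e. E[⟨X, g⟩⟨ε, f⟩] = 0 for all f ∈ L²(I₁) and g ∈ L²(I₂), then for every j > r one has ξ_j = ε_j almost surely; equivalently, the random variable ⟨X, b_j⟩ = Σ_{k≥1} β_{jk} η_k vanishes almost surely, where b_j(v) = ∫_{I₁} β(u,v) φ_j(u) du. -/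
open MeasureTheory Filter
open scoped RealInnerProductSpace

/-- The elementary tensor `f ⊗ g` of two `L²` functions, as an element of `L²` of the
product measure: `(f ⊗ g)(u, v) = f(u) * g(v)`. -/
noncomputable def tensorLp {α β : Type*} [MeasurableSpace α] [MeasurableSpace β]
    {μ : Measure α} {ν : Measure β} [SigmaFinite μ] [SigmaFinite ν]
    (f : Lp ℝ 2 μ) (g : Lp ℝ 2 ν) : Lp ℝ 2 (μ.prod ν) :=
  MemLp.toLp (fun p : α × β => f p.1 * g p.2)
    (by
      have hfm : AEStronglyMeasurable (fun p : α × β => (f : α → ℝ) p.1) (μ.prod ν) :=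
        (Lp.aestronglyMeasurable f).comp_fst
      have hgm : AEStronglyMeasurable (fun p : α × β => (g : β → ℝ) p.2) (μ.prod ν) :=
        (Lp.aestronglyMeasurable g).comp_snd
      have hm : AEStronglyMeasurable (fun p : α × β => (f : α → ℝ) p.1 * (g : β → ℝ) p.2)
          (μ.prod ν) := hfm.mul hgm
      rw [memLp_two_iff_integrable_sq hm]
      have hf2 : Integrable (fun a => (f : α → ℝ) a ^ 2) μ :=
        (memLp_two_iff_integrable_sq (Lp.aestronglyMeasurable f)).1 (Lp.memLp f)
      have hg2 : Integrable (fun b => (g : β → ℝ) b ^ 2) ν :=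
        (memLp_two_iff_integrable_sq (Lp.aestronglyMeasurable g)).1 (Lp.memLp g)
      simpa [mul_pow] using hf2.mul_prod hg2)

section AuxTensor

variable {α β : Type*} [MeasurableSpace α] [MeasurableSpace β]
    {μ : Measure α} {ν : Measure β} [SigmaFinite μ] [SigmaFinite ν]

lemma tensorLp_coe (f : Lp ℝ 2 μ) (g : Lp ℝ 2 ν) :
    (tensorLp f g : α × β → ℝ) =ᵐ[μ.prod ν] fun p => f p.1 * g p.2 :=
  MemLp.coeFn_toLp _

lemma snd_aeeq {g g' : β → ℝ} (h : g =ᵐ[ν] g') :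
    (fun p : α × β => g p.2) =ᵐ[μ.prod ν] fun p => g' p.2 :=
  (Measure.quasiMeasurePreserving_snd).ae_eq h

lemma tensorLp_add (f : Lp ℝ 2 μ) (g g' : Lp ℝ 2 ν) :
    tensorLp f (g + g') = tensorLp f g + tensorLp f g' := by
  apply Lp.ext
  have h1 := tensorLp_coe (μ := μ) (ν := ν) f (g + g')
  have h2 := tensorLp_coe (μ := μ) (ν := ν) f g
  have h3 := tensorLp_coe (μ := μ) (ν := ν) f g'
  have hadd : ((g + g' : Lp ℝ 2 ν) : β → ℝ) =ᵐ[ν] fun b => g b + g' b := Lp.coeFn_add g g'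
  have h4 : (fun p : α × β => ((g + g' : Lp ℝ 2 ν) : β → ℝ) p.2)
      =ᵐ[μ.prod ν] fun p => g p.2 + g' p.2 := snd_aeeq hadd
  have h5 := Lp.coeFn_add (tensorLp f g) (tensorLp f g')
  filter_upwards [h1, h2, h3, h4, h5] with p e1 e2 e3 e4 e5
  simp only [Pi.add_apply] at *
  rw [e1, e5, e2, e3, e4, mul_add]

lemma inner_tensorLp (f f' : Lp ℝ 2 μ) (g g' : Lp ℝ 2 ν) :
    ⟪tensorLp f g, tensorLp f' g'⟫ = ⟪f, f'⟫ * ⟪g, g'⟫ := by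
  rw [L2.inner_def, L2.inner_def, L2.inner_def]
  simp only [RCLike.inner_apply, conj_trivial]
  have hc : (fun a => (tensorLp f' g' : α × β → ℝ) a * (tensorLp f g : α × β → ℝ) a)
      =ᵐ[μ.prod ν] fun p => (f' p.1 * g' p.2) * (f p.1 * g p.2) := by
    filter_upwards [tensorLp_coe f' g', tensorLp_coe f g] with p h1 h2
    rw [h1, h2]
  rw [integral_congr_ae hc]
  have : ∀ p : α × β, (f' p.1 * g' p.2) * (f p.1 * g p.2)
      = (f' p.1 * f p.1) * (g' p.2 * g p.2) := fun p => by ring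
  simp only [this]
  exact integral_prod_mul (L := ℝ) (fun a => f' a * f a) (fun b => g' b * g b)


lemma tensorLp_smul (f : Lp ℝ 2 μ) (c : ℝ) (g : Lp ℝ 2 ν) :
    tensorLp f (c • g) = c • tensorLp f g := by
  apply Lp.ext
  have h1 := tensorLp_coe (μ := μ) (ν := ν) f (c • g)
  have h2 := tensorLp_coe (μ := μ) (ν := ν) f g
  have h4 : (fun p : α × β => ((c • g : Lp ℝ 2 ν) : β → ℝ) p.2)
      =ᵐ[μ.prod ν] fun p => c * g p.2 := snd_aeeq (Lp.coeFn_smul c g)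
  have h5 := Lp.coeFn_smul c (tensorLp f g)
  filter_upwards [h1, h2, h4, h5] with p e1 e2 e4 e5
  rw [e1, e5, Pi.smul_apply, smul_eq_mul, e2, e4]; ring

lemma norm_tensorLp (f : Lp ℝ 2 μ) (g : Lp ℝ 2 ν) :
    ‖tensorLp f g‖ = ‖f‖ * ‖g‖ := by
  have h := inner_tensorLp f f g g
  rw [real_inner_self_eq_norm_sq, real_inner_self_eq_norm_sq, real_inner_self_eq_norm_sq] at h
  nlinarith [norm_nonneg (tensorLp f g), norm_nonneg f, norm_nonneg g,
    mul_nonneg (norm_nonneg f) (norm_nonneg g)]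

lemma integrable_inner_mul {Ω E F : Type*} [MeasurableSpace Ω] {P : Measure Ω}
    [NormedAddCommGroup E] [InnerProductSpace ℝ E]
    [NormedAddCommGroup F] [InnerProductSpace ℝ F]
    {W : Ω → E} {V : Ω → F} (hW : AEStronglyMeasurable W P) (hV : AEStronglyMeasurable V P)
    (hW2 : Integrable (fun ω => ‖W ω‖ ^ 2) P) (hV2 : Integrable (fun ω => ‖V ω‖ ^ 2) P)
    (f : E) (g : F) : Integrable (fun ω => ⟪W ω, f⟫ * ⟪V ω, g⟫) P := by
  refine (((hW2.add hV2).const_mul (‖f‖ * ‖g‖))).mono' ?_ ?_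
  · exact (hW.inner aestronglyMeasurable_const).mul (hV.inner aestronglyMeasurable_const)
  · filter_upwards with ω
    simp only [Pi.add_apply, Real.norm_eq_abs]
    have h1 : |⟪W ω, f⟫| ≤ ‖W ω‖ * ‖f‖ := abs_real_inner_le_norm (W ω) f
    have h2 : |⟪V ω, g⟫| ≤ ‖V ω‖ * ‖g‖ := abs_real_inner_le_norm (V ω) g
    have h3 : |⟪W ω, f⟫ * ⟪V ω, g⟫| ≤ (‖W ω‖ * ‖f‖) * (‖V ω‖ * ‖g‖) := by
      rw [abs_mul]
      exact mul_le_mul h1 h2 (abs_nonneg _) (by positivity)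
    refine h3.trans ?_
    nlinarith [sq_nonneg (‖W ω‖ - ‖V ω‖), mul_nonneg (norm_nonneg f) (norm_nonneg g),
      norm_nonneg (W ω), norm_nonneg (V ω), norm_nonneg f, norm_nonneg g]

end AuxTensor

/-- Theorem 1, noise representation for high indices. Under the curve
linear regression model (weak form), if the correlation between `Y` and `X` is
`r`-dimensional — with 0-based indexing `lam r = 0`, since `lam r` is the paper's
`λ_{r+1}` — and the noise is uncorrelated with the regressor, then for every `j > r`
(0-based: `r ≤ j`) one has `ξ_j = ε_j` almost surely; equivalently the random variable
`⟪X, b_j⟫ = ∑_k β_{jk} η_k` — which equals `⟪β, φ_j ⊗ X⟫` where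
`b_j(v) = ∫_{I₁} β(u,v) φ_j(u) du` — vanishes almost surely. -/
theorem curve_regression_high_index_noise
    {Ω : Type*} [MeasurableSpace Ω] (P : Measure Ω) [IsProbabilityMeasure P]
    (I₁ I₂ : Set ℝ) (hI₁ : IsCompact I₁) (hI₂ : IsCompact I₂)
    (Y : Ω → Lp ℝ 2 (volume.restrict I₁)) (X : Ω → Lp ℝ 2 (volume.restrict I₂))
    (eps : Ω → Lp ℝ 2 (volume.restrict I₁))
    (hYm : AEStronglyMeasurable Y P) (hXm : AEStronglyMeasurable X P)
    (hepsm : AEStronglyMeasurable eps P)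
    (hmom : Integrable (fun ω => ‖Y ω‖ ^ 2 + ‖X ω‖ ^ 2) P)
    (hepsmom : Integrable (fun ω => ‖eps ω‖ ^ 2) P)
    (hY0 : ∀ f : Lp ℝ 2 (volume.restrict I₁), ∫ ω, ⟪Y ω, f⟫ ∂P = 0)
    (hX0 : ∀ g : Lp ℝ 2 (volume.restrict I₂), ∫ ω, ⟪X ω, g⟫ ∂P = 0)
    (heps0 : ∀ f : Lp ℝ 2 (volume.restrict I₁), ∫ ω, ⟪eps ω, f⟫ ∂P = 0)
    (B : Lp ℝ 2 ((volume.restrict I₁).prod (volume.restrict I₂)))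
    (hmodel : ∀ᵐ ω ∂P, ∀ f : Lp ℝ 2 (volume.restrict I₁),
      ⟪Y ω, f⟫ = ⟪B, tensorLp f (X ω)⟫ + ⟪eps ω, f⟫)
    -- the noise is uncorrelated with the regressor
    (hXeps : ∀ (g : Lp ℝ 2 (volume.restrict I₂)) (f : Lp ℝ 2 (volume.restrict I₁)),
      ∫ ω, ⟪X ω, g⟫ * ⟪eps ω, f⟫ ∂P = 0)
    -- the cross-covariance kernel and its singular value decomposition
    (K : Lp ℝ 2 ((volume.restrict I₁).prod (volume.restrict I₂)))
    (hK : ∀ (f : Lp ℝ 2 (volume.restrict I₁)) (g : Lp ℝ 2 (volume.restrict I₂)),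
      ⟪K, tensorLp f g⟫ = ∫ ω, ⟪Y ω, f⟫ * ⟪X ω, g⟫ ∂P)
    (lam : ℕ → ℝ) (φ : ℕ → Lp ℝ 2 (volume.restrict I₁)) (ψ : ℕ → Lp ℝ 2 (volume.restrict I₂))
    (hφ : Orthonormal ℝ φ) (hψ : Orthonormal ℝ ψ)
    (hφtot : (Submodule.span ℝ (Set.range φ)).topologicalClosure = ⊤)
    (hψtot : (Submodule.span ℝ (Set.range ψ)).topologicalClosure = ⊤)
    (hlam_nonneg : ∀ j, 0 ≤ lam j) (hlam_mono : Antitone lam)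
    (hSVD : HasSum (fun j => Real.sqrt (lam j) • tensorLp (φ j) (ψ j)) K)
    -- `r`-dimensional correlation: the paper's `λ_{r+1}` vanishes
    (r : ℕ) (hr : lam r = 0) :
    ∀ j, r ≤ j →
      ∀ᵐ ω ∂P, ⟪Y ω, φ j⟫ = ⟪eps ω, φ j⟫ ∧ ⟪B, tensorLp (φ j) (X ω)⟫ = 0 := by
  intro j hj
  have hlamj : lam j = 0 := le_antisymm (hr ▸ hlam_mono hj) (hlam_nonneg j)
  -- the functional g ↦ ⟪B, φⱼ ⊗ g⟫ and its Riesz representative b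
  let L : Lp ℝ 2 (volume.restrict I₂) →L[ℝ] ℝ :=
    LinearMap.mkContinuous
      { toFun := fun g => ⟪B, tensorLp (φ j) g⟫
        map_add' := fun g g' => by simp only [tensorLp_add, inner_add_right]
        map_smul' := fun c g => by
          simp only [tensorLp_smul, inner_smul_right, RingHom.id_apply, smul_eq_mul] }
      (‖B‖ * ‖φ j‖)
      (fun g => by
        calc ‖⟪B, tensorLp (φ j) g⟫‖ ≤ ‖B‖ * ‖tensorLp (φ j) g‖ := norm_inner_le_norm _ _
        _ = ‖B‖ * ‖φ j‖ * ‖g‖ := by rw [norm_tensorLp]; ring)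
  let b : Lp ℝ 2 (volume.restrict I₂) := (InnerProductSpace.toDual ℝ _).symm L
  have hb : ∀ x, ⟪x, b⟫ = ⟪B, tensorLp (φ j) x⟫ := fun x => by
    rw [real_inner_comm]
    exact InnerProductSpace.toDual_symm_apply
  -- ⟪K, φⱼ ⊗ b⟫ = 0
  have hKzero : ⟪K, tensorLp (φ j) b⟫ = 0 := by
    have hs := hSVD.mapL (innerSL ℝ (tensorLp (φ j) b))
    have hzero : ∀ k, innerSL ℝ (tensorLp (φ j) b)
        (Real.sqrt (lam k) • tensorLp (φ k) (ψ k)) = 0 := by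
      intro k
      simp only [innerSL_apply_apply, inner_smul_right, smul_eq_mul]
      rcases eq_or_ne k j with hkj | hkj
      · subst hkj
        rw [hlamj, Real.sqrt_zero, zero_mul]
      · rw [inner_tensorLp, hφ.2 hkj.symm]
        ring
    have : HasSum (fun _ : ℕ => (0 : ℝ)) (innerSL ℝ (tensorLp (φ j) b) K) := by
      simpa only [hzero] using hs
    have h0 := this.unique hasSum_zero
    rw [real_inner_comm]
    simpa using h0
  -- integrability
  have hY2 : Integrable (fun ω => ‖Y ω‖ ^ 2) P := by
    refine hmom.mono' ((hYm.norm.aemeasurable.pow_const 2).aestronglyMeasurable) ?_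
    filter_upwards with ω
    rw [Real.norm_eq_abs, abs_of_nonneg (by positivity)]
    nlinarith [sq_nonneg ‖X ω‖]
  have hX2 : Integrable (fun ω => ‖X ω‖ ^ 2) P := by
    refine hmom.mono' ((hXm.norm.aemeasurable.pow_const 2).aestronglyMeasurable) ?_
    filter_upwards with ω
    rw [Real.norm_eq_abs, abs_of_nonneg (by positivity)]
    nlinarith [sq_nonneg ‖Y ω‖]
  have hintYX : Integrable (fun ω => ⟪Y ω, φ j⟫ * ⟪X ω, b⟫) P :=
    integrable_inner_mul hYm hXm hY2 hX2 (φ j) b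
  have hintXeps : Integrable (fun ω => ⟪X ω, b⟫ * ⟪eps ω, φ j⟫) P :=
    integrable_inner_mul hXm hepsm hX2 hepsmom b (φ j)
  have hintZZ : Integrable (fun ω => ⟪X ω, b⟫ * ⟪X ω, b⟫) P :=
    integrable_inner_mul hXm hXm hX2 hX2 b b
  -- the key integral identity
  have hae : (fun ω => ⟪X ω, b⟫ * ⟪X ω, b⟫) =ᵐ[P]
      fun ω => ⟪Y ω, φ j⟫ * ⟪X ω, b⟫ - ⟪X ω, b⟫ * ⟪eps ω, φ j⟫ := by
    filter_upwards [hmodel] with ω hm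
    have h := hm (φ j)
    rw [← hb (X ω)] at h
    have : ⟪X ω, b⟫ = ⟪Y ω, φ j⟫ - ⟪eps ω, φ j⟫ := by linarith
    rw [this]; ring
  have hkey : ∫ ω, ⟪X ω, b⟫ * ⟪X ω, b⟫ ∂P = 0 := by
    rw [integral_congr_ae hae, integral_sub hintYX hintXeps, ← hK (φ j) b, hKzero,
      hXeps b (φ j), sub_zero]
  have hZZ0 : (fun ω => ⟪X ω, b⟫ * ⟪X ω, b⟫) =ᵐ[P] 0 :=
    (integral_eq_zero_iff_of_nonneg_ae
      (Eventually.of_forall fun ω => mul_self_nonneg _) hintZZ).mp hkey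
  have hZ0 : ∀ᵐ ω ∂P, ⟪X ω, b⟫ = 0 := by
    filter_upwards [hZZ0] with ω hz
    exact mul_self_eq_zero.mp hz
  filter_upwards [hmodel, hZ0] with ω hm hz
  have hZB : ⟪B, tensorLp (φ j) (X ω)⟫ = 0 := by rw [← hb (X ω)]; exact hz
  exact ⟨by rw [hm (φ j), hZB, zero_add], hZB⟩
end

section
/- (Vector version of Theorem 1.) In the vector regression setting: (i) E[u vᵀ] = Λ; (ii) almost surely, u_j = ((UᵀBV) v)_j + (Uᵀε)_j for every j; and (iii) for every j > r, the random variable ((UᵀBV) v)_j vanishes almost surely, so that u_j = (Uᵀε)_j almost surely. Hence the multiple regression y = Bx + ε reduces to the r scalar regressions u_j = vᵀβ_j + (Uᵀε)_j, j = 1, …, r, with β_j the j-th row of UᵀBV. -/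
open MeasureTheory Matrix Finset

lemma l2_mul_integrable {Ω : Type*} [MeasurableSpace Ω] {P : Measure Ω} {f g : Ω → ℝ}
    (hf : MemLp f 2 P) (hg : MemLp g 2 P) : Integrable (fun ω => f ω * g ω) P := by
  have h := hg.smul (r := 1) hf (hpqr := ⟨by rw [inv_one, ENNReal.inv_two_add_inv_two]⟩)
  rw [← memLp_one_iff_integrable]
  exact h

lemma int_sum_mul {Ω : Type*} [MeasurableSpace Ω] (P : Measure Ω) {n : ℕ}
    (f : Fin n → Ω → ℝ) (g : Ω → ℝ) (c : Fin n → ℝ)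
    (hf : ∀ i, MemLp (f i) 2 P) (hg : MemLp g 2 P) :
    ∫ ω, (∑ i, c i * f i ω) * g ω ∂P = ∑ i, c i * ∫ ω, f i ω * g ω ∂P := by
  have key : ∀ ω, (∑ i, c i * f i ω) * g ω = ∑ i, c i * (f i ω * g ω) := by
    intro ω; rw [Finset.sum_mul]; exact Finset.sum_congr rfl fun i _ => by ring
  simp_rw [key]
  rw [integral_finset_sum _ fun i _ => ((l2_mul_integrable (hf i) hg).const_mul _)]
  exact Finset.sum_congr rfl fun i _ => integral_const_mul _ _

lemma int_sum_mul_sum {Ω : Type*} [MeasurableSpace Ω] (P : Measure Ω) {n m : ℕ}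
    (f : Fin n → Ω → ℝ) (g : Fin m → Ω → ℝ) (c : Fin n → ℝ) (d : Fin m → ℝ)
    (hf : ∀ i, MemLp (f i) 2 P) (hg : ∀ j, MemLp (g j) 2 P) :
    ∫ ω, (∑ i, c i * f i ω) * (∑ j, d j * g j ω) ∂P
      = ∑ i, ∑ j, c i * d j * ∫ ω, f i ω * g j ω ∂P := by
  have key : ∀ ω, (∑ i, c i * f i ω) * (∑ j, d j * g j ω)
      = ∑ i, ∑ j, c i * d j * (f i ω * g j ω) := by
    intro ω
    rw [Finset.sum_mul_sum]
    exact Finset.sum_congr rfl fun i _ => Finset.sum_congr rfl fun j _ => by ring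
  simp_rw [key]
  rw [integral_finset_sum _ fun i _ => integrable_finset_sum _ fun j _ =>
    ((l2_mul_integrable (hf i) (hg j)).const_mul _)]
  refine Finset.sum_congr rfl fun i _ => ?_
  rw [integral_finset_sum _ fun j _ => ((l2_mul_integrable (hf i) (hg j)).const_mul _)]
  exact Finset.sum_congr rfl fun j _ => integral_const_mul _ _

/-- vector version of Theorem 1. In the vector regression setting
`y = Bx + ε` with `Σ_yx = E[y xᵀ] = U Λ Vᵀ` a singular value decomposition whose diagonal
entries satisfy `Λ_{11} ≥ ⋯ ≥ Λ_{rr} > 0` and `Λ_{jj} = 0` for `j > r`, and with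
`u = Uᵀy`, `v = Vᵀx`:
(i) `E[u vᵀ] = Λ`;
(ii) almost surely `u = (UᵀBV) v + Uᵀε` (componentwise);
(iii) for every `j > r` (0-based: `r ≤ j`), `((UᵀBV) v)_j = 0` almost surely, so
`u_j = (Uᵀε)_j` almost surely.
(Indices are 0-based: row `i : Fin p` is the paper's row `i+1`.) -/
theorem vector_regression_svd_reduction
    {Ω : Type*} [MeasurableSpace Ω] (P : Measure Ω) [IsProbabilityMeasure P]
    (p q r : ℕ) (hp : 0 < p) (hq : 0 < q) (hr : 0 < r) (hrpq : r ≤ min p q)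
    (y : Ω → Fin p → ℝ) (x : Ω → Fin q → ℝ) (eps : Ω → Fin p → ℝ)
    (hym : Measurable y) (hxm : Measurable x) (hepsm : Measurable eps)
    (hyL2 : ∀ i, MemLp (fun ω => y ω i) 2 P)
    (hxL2 : ∀ j, MemLp (fun ω => x ω j) 2 P)
    (hepsL2 : ∀ i, MemLp (fun ω => eps ω i) 2 P)
    (hy0 : ∀ i, ∫ ω, y ω i ∂P = 0) (hx0 : ∀ j, ∫ ω, x ω j ∂P = 0)
    (heps0 : ∀ i, ∫ ω, eps ω i ∂P = 0)
    (B : Matrix (Fin p) (Fin q) ℝ)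
    (hmodel : ∀ᵐ ω ∂P, y ω = B.mulVec (x ω) + eps ω)
    (hxeps : ∀ (j : Fin q) (i : Fin p), ∫ ω, x ω j * eps ω i ∂P = 0)
    (U : Matrix (Fin p) (Fin p) ℝ) (V : Matrix (Fin q) (Fin q) ℝ)
    (L : Matrix (Fin p) (Fin q) ℝ)
    (hU : Uᵀ * U = 1) (hU' : U * Uᵀ = 1)
    (hV : Vᵀ * V = 1) (hV' : V * Vᵀ = 1)
    (hSVD : (Matrix.of fun i j => ∫ ω, y ω i * x ω j ∂P) = U * L * Vᵀ)
    (hLoff : ∀ (i : Fin p) (j : Fin q), (i : ℕ) ≠ (j : ℕ) → L i j = 0)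
    (hLpos : ∀ (i : Fin p) (j : Fin q), (i : ℕ) = (j : ℕ) → (i : ℕ) < r → 0 < L i j)
    (hLmono : ∀ (i i' : Fin p) (j j' : Fin q), (i : ℕ) = (j : ℕ) → (i' : ℕ) = (j' : ℕ) →
      (i : ℕ) ≤ (i' : ℕ) → (i' : ℕ) < r → L i' j' ≤ L i j)
    (hLzero : ∀ (i : Fin p) (j : Fin q), (i : ℕ) = (j : ℕ) → r ≤ (i : ℕ) → L i j = 0) :
    (∀ (i : Fin p) (j : Fin q),
        ∫ ω, (Uᵀ.mulVec (y ω)) i * (Vᵀ.mulVec (x ω)) j ∂P = L i j) ∧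
    (∀ᵐ ω ∂P,
        Uᵀ.mulVec (y ω)
          = (Uᵀ * B * V).mulVec (Vᵀ.mulVec (x ω)) + Uᵀ.mulVec (eps ω)) ∧
    (∀ i : Fin p, r ≤ (i : ℕ) →
        (∀ᵐ ω ∂P, ((Uᵀ * B * V).mulVec (Vᵀ.mulVec (x ω))) i = 0) ∧
        (∀ᵐ ω ∂P, (Uᵀ.mulVec (y ω)) i = (Uᵀ.mulVec (eps ω)) i)) := by
  set Sig : Matrix (Fin p) (Fin q) ℝ := Matrix.of fun i j => ∫ ω, y ω i * x ω j ∂P with hSig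
  -- matrix algebra helpers
  have hM : Uᵀ * B * V * Vᵀ = Uᵀ * B := by
    rw [Matrix.mul_assoc (Uᵀ * B), hV', Matrix.mul_one]
  have hUSig : Uᵀ * Sig = L * Vᵀ := by
    rw [hSVD, ← Matrix.mul_assoc, ← Matrix.mul_assoc, hU, Matrix.one_mul]
  -- Part (i)
  have part1 : ∀ (i : Fin p) (j : Fin q),
      ∫ ω, (Uᵀ.mulVec (y ω)) i * (Vᵀ.mulVec (x ω)) j ∂P = L i j := by
    intro i j
    have h1 := int_sum_mul_sum P (fun k ω => y ω k) (fun l ω => x ω l)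
      (fun k => Uᵀ i k) (fun l => Vᵀ j l) hyL2 hxL2
    have h2 : ∫ ω, (Uᵀ.mulVec (y ω)) i * (Vᵀ.mulVec (x ω)) j ∂P
        = ∑ k, ∑ l, Uᵀ i k * Vᵀ j l * Sig k l := by
      simpa [Matrix.mulVec, dotProduct, hSig] using h1
    rw [h2]
    have h3 : ∑ k, ∑ l, Uᵀ i k * Vᵀ j l * Sig k l = (Uᵀ * Sig * V) i j := by
      rw [Matrix.mul_apply]
      simp_rw [Matrix.mul_apply, Finset.sum_mul]
      rw [Finset.sum_comm]
      exact Finset.sum_congr rfl fun k _ => Finset.sum_congr rfl fun l _ => by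
        simp [Matrix.transpose_apply]; ring
    rw [h3, hUSig, Matrix.mul_assoc, hV, Matrix.mul_one]
  -- Part (ii)
  have part2 : ∀ᵐ ω ∂P,
      Uᵀ.mulVec (y ω) = (Uᵀ * B * V).mulVec (Vᵀ.mulVec (x ω)) + Uᵀ.mulVec (eps ω) := by
    filter_upwards [hmodel] with ω hω
    rw [hω, Matrix.mulVec_add, Matrix.mulVec_mulVec, Matrix.mulVec_mulVec, hM,
      ← Matrix.mulVec_mulVec]
  refine ⟨part1, part2, ?_⟩
  -- Part (iii)
  intro i hi
  have hLrow : ∀ j : Fin q, L i j = 0 := fun j => by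
    by_cases h : (i : ℕ) = (j : ℕ)
    · exact hLzero i j h hi
    · exact hLoff i j h
  -- the random variable w
  set w : Ω → ℝ := fun ω => ((Uᵀ * B * V).mulVec (Vᵀ.mulVec (x ω))) i with hwdef
  have hw : ∀ ω, w ω = ∑ l, (Uᵀ * B) i l * x ω l := by
    intro ω
    show ((Uᵀ * B * V).mulVec (Vᵀ.mulVec (x ω))) i = _
    rw [Matrix.mulVec_mulVec, hM]
    simp [Matrix.mulVec, dotProduct]
  have hwL2 : MemLp w 2 P := by
    have h : MemLp (fun ω => ∑ l, (Uᵀ * B) i l * x ω l) 2 P :=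
      memLp_finset_sum (f := fun l ω => (Uᵀ * B) i l * x ω l) Finset.univ
        fun l _ => (hxL2 l).const_mul _
    convert h using 1
    funext ω; exact hw ω
  have huL2 : MemLp (fun ω => (Uᵀ.mulVec (y ω)) i) 2 P := by
    have h : MemLp (fun ω => ∑ k, Uᵀ i k * y ω k) 2 P :=
      memLp_finset_sum (f := fun k ω => Uᵀ i k * y ω k) Finset.univ
        fun k _ => (hyL2 k).const_mul _
    convert h using 1
    funext ω; simp [Matrix.mulVec, dotProduct]
  have heL2 : MemLp (fun ω => (Uᵀ.mulVec (eps ω)) i) 2 P := by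
    have h : MemLp (fun ω => ∑ k, Uᵀ i k * eps ω k) 2 P :=
      memLp_finset_sum (f := fun k ω => Uᵀ i k * eps ω k) Finset.univ
        fun k _ => (hepsL2 k).const_mul _
    convert h using 1
    funext ω; simp [Matrix.mulVec, dotProduct]
  -- E[u_i x_k] = 0
  have hux : ∀ k : Fin q, ∫ ω, (Uᵀ.mulVec (y ω)) i * x ω k ∂P = 0 := by
    intro k
    have h1 := int_sum_mul P (fun a ω => y ω a) (fun ω => x ω k)
      (fun a => Uᵀ i a) hyL2 (hxL2 k)
    have h2 : ∫ ω, (Uᵀ.mulVec (y ω)) i * x ω k ∂P = ∑ a, Uᵀ i a * Sig a k := by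
      simpa [Matrix.mulVec, dotProduct, hSig] using h1
    have h3 : ∑ a, Uᵀ i a * Sig a k = (Uᵀ * Sig) i k := (Matrix.mul_apply).symm
    rw [h2, h3, hUSig, Matrix.mul_apply]
    exact Finset.sum_eq_zero fun j _ => by rw [hLrow j, zero_mul]
  -- E[e_i x_k] = 0
  have hex : ∀ k : Fin q, ∫ ω, (Uᵀ.mulVec (eps ω)) i * x ω k ∂P = 0 := by
    intro k
    have h1 := int_sum_mul P (fun a ω => eps ω a) (fun ω => x ω k)
      (fun a => Uᵀ i a) hepsL2 (hxL2 k)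
    have h2 : ∫ ω, (Uᵀ.mulVec (eps ω)) i * x ω k ∂P
        = ∑ a, Uᵀ i a * ∫ ω, eps ω a * x ω k ∂P := by
      simpa [Matrix.mulVec, dotProduct] using h1
    rw [h2]
    refine Finset.sum_eq_zero fun a _ => ?_
    have : (fun ω => eps ω a * x ω k) = fun ω => x ω k * eps ω a := by
      funext ω; ring
    rw [this, hxeps k a, mul_zero]
  -- E[w x_k] = 0
  have hwx : ∀ k : Fin q, ∫ ω, w ω * x ω k ∂P = 0 := by
    intro k
    have hae : (fun ω => w ω * x ω k)
        =ᵐ[P] fun ω => (Uᵀ.mulVec (y ω)) i * x ω k - (Uᵀ.mulVec (eps ω)) i * x ω k := by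
      filter_upwards [part2] with ω h2
      have h := congrFun h2 i
      rw [Pi.add_apply] at h
      have : w ω = (Uᵀ.mulVec (y ω)) i - (Uᵀ.mulVec (eps ω)) i := by
        rw [hwdef]; rw [h]; ring
      rw [this]; ring
    rw [integral_congr_ae hae,
      integral_sub (l2_mul_integrable huL2 (hxL2 k)) (l2_mul_integrable heL2 (hxL2 k)),
      hux k, hex k, sub_zero]
  -- E[w^2] = 0
  have hw2 : ∫ ω, w ω * w ω ∂P = 0 := by
    have key : ∀ ω, w ω * w ω = ∑ l, (Uᵀ * B) i l * (w ω * x ω l) := by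
      intro ω
      conv_lhs => rw [show w ω * w ω = w ω * (∑ l, (Uᵀ * B) i l * x ω l) by rw [← hw ω]]
      rw [Finset.mul_sum]
      exact Finset.sum_congr rfl fun l _ => by ring
    simp_rw [key]
    rw [integral_finset_sum _ fun l _ =>
      ((l2_mul_integrable hwL2 (hxL2 l)).const_mul _)]
    refine Finset.sum_eq_zero fun l _ => ?_
    rw [integral_const_mul, hwx l, mul_zero]
  -- conclude w = 0 a.e.
  have hw0 : ∀ᵐ ω ∂P, w ω = 0 := by
    have hnn : 0 ≤ fun ω => w ω * w ω := fun ω => mul_self_nonneg _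
    have hint : Integrable (fun ω => w ω * w ω) P := l2_mul_integrable hwL2 hwL2
    have := (integral_eq_zero_iff_of_nonneg hnn hint).mp hw2
    filter_upwards [this] with ω hω
    exact mul_self_eq_zero.mp hω
  refine ⟨hw0, ?_⟩
  filter_upwards [part2, hw0] with ω h2 h0
  have h := congrFun h2 i
  rw [Pi.add_apply] at h
  have h0' : ((Uᵀ * B * V).mulVec (Vᵀ.mulVec (x ω))) i = 0 := h0
  rw [h, h0', zero_add]
end

section
/- (Theorem 2 for IC₁.) Define IC₁ⁿ(q) = d⁻² Σ_{k=q+1}^d λ̂ⁿ_k + τ₁ q g(n) for integers 0 ≤ q ≤ d. Then for every integer q with 0 ≤ q < d and q ≠ r, P(IC₁ⁿ(r) < IC₁ⁿ(q)) → 1 as n → ∞. -/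
open MeasureTheory Filter

/-- A sequence `(W n)` of real random variables is *bounded in probability* if for every
`ε > 0` there exists `M > 0` such that `P(|W n| > M) ≤ ε` for all `n`. -/
def BoundedInProb {Ω : Type*} [MeasurableSpace Ω] (P : Measure Ω)
    (W : ℕ → Ω → ℝ) : Prop :=
  ∀ ε : ℝ, 0 < ε → ∃ M : ℝ, 0 < M ∧ ∀ n, P {ω | M < |W n ω|} ≤ ENNReal.ofReal ε

private lemma exists_pos_ofReal_le (ε : ENNReal) (hε : 0 < ε) :
    ∃ δ : ℝ, 0 < δ ∧ ENNReal.ofReal δ ≤ ε := by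
  rcases eq_or_ne ε ⊤ with h | h
  · exact ⟨1, one_pos, by simp [h]⟩
  · exact ⟨ε.toReal, ENNReal.toReal_pos hε.ne' h, by rw [ENNReal.ofReal_toReal h]⟩

private lemma sqrt_nat_tendsto : Tendsto (fun n : ℕ => Real.sqrt n) atTop atTop := by
  rw [tendsto_atTop_atTop]
  intro b
  refine ⟨⌈(max b 0) ^ 2⌉₊, fun n hn => ?_⟩
  have h1 : (max b 0) ^ 2 ≤ (n : ℝ) := le_trans (Nat.le_ceil _) (by exact_mod_cast hn)
  have h2 : Real.sqrt ((max b 0) ^ 2) ≤ Real.sqrt n := Real.sqrt_le_sqrt h1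
  rw [Real.sqrt_sq (le_max_right b 0)] at h2
  exact le_trans (le_max_left b 0) h2

set_option maxHeartbeats 1000000

private lemma union_bound {Ω : Type*} [MeasurableSpace Ω] (P : Measure Ω)
    (S : Finset ℕ) (hS : S.Nonempty) (B : ℕ → Set Ω) (A : Set Ω)
    (hsub : A ⊆ ⋃ k ∈ S, B k) (δ : ℝ)
    (hb : ∀ k ∈ S, P (B k) ≤ ENNReal.ofReal (δ / S.card)) :
    P A ≤ ENNReal.ofReal δ := by
  have hcard : (S.card : ℝ) ≠ 0 := by
    exact_mod_cast (Finset.card_pos.mpr hS).ne'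
  calc P A ≤ P (⋃ k ∈ S, B k) := measure_mono hsub
    _ ≤ ∑ k ∈ S, P (B k) := measure_biUnion_finset_le _ _
    _ ≤ ∑ _k ∈ S, ENNReal.ofReal (δ / S.card) := Finset.sum_le_sum hb
    _ = (S.card : ENNReal) * ENNReal.ofReal (δ / S.card) := by
        rw [Finset.sum_const, nsmul_eq_mul]
    _ = ENNReal.ofReal ((S.card : ℝ) * (δ / S.card)) := by
        rw [ENNReal.ofReal_mul (Nat.cast_nonneg _), ENNReal.ofReal_natCast]
    _ = ENNReal.ofReal δ := by rw [mul_div_cancel₀ _ hcard]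

/-- Theorem 2 for `IC₁`. With `IC₁ⁿ(q) = d⁻² ∑_{k=q+1}^d λ̂ⁿ_k + τ₁ q g(n)`,
for every `0 ≤ q < d` with `q ≠ r`, `P(IC₁ⁿ(r) < IC₁ⁿ(q)) → 1` as `n → ∞`.
(Here the eigenvalue estimators are 1-based: `lamhat n k` for `k ∈ {1, …, d}`.) -/
theorem ic1_consistency
    {Ω : Type*} [MeasurableSpace Ω] (P : Measure Ω) [IsProbabilityMeasure P]
    (r d : ℕ) (hrd : r < d)
    (lam : ℕ → ℝ)
    (hlam_pos : ∀ k, 1 ≤ k → k ≤ r → 0 < lam k)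
    (hlam_strict : ∀ k, 1 ≤ k → k < r → lam (k + 1) < lam k)
    (hlam_zero : ∀ k, r < k → k ≤ d → lam k = 0)
    (lamhat : ℕ → ℕ → Ω → ℝ)
    (hmeas : ∀ n k, Measurable (lamhat n k))
    (hnonneg : ∀ n k ω, 1 ≤ k → k ≤ d → 0 ≤ lamhat n k ω)
    (hroot : ∀ k, 1 ≤ k → k ≤ r →
      BoundedInProb P (fun n ω => Real.sqrt n * (lamhat n k ω - lam k)))
    (hfast : ∀ k, r < k → k ≤ d →
      BoundedInProb P (fun n ω => (n : ℝ) * lamhat n k ω))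
    (τ₁ : ℝ) (hτ₁ : 0 < τ₁)
    (g : ℕ → ℝ) (hg_pos : ∀ n, 0 < g n)
    (hg0 : Tendsto g atTop (nhds 0))
    (hng : Tendsto (fun n : ℕ => (n : ℝ) * g n) atTop atTop) :
    ∀ q, q < d → q ≠ r →
      Tendsto
        (fun n => P {ω |
          ((d : ℝ) ^ 2)⁻¹ * ∑ k ∈ Finset.Icc (r + 1) d, lamhat n k ω + τ₁ * r * g n <
          ((d : ℝ) ^ 2)⁻¹ * ∑ k ∈ Finset.Icc (q + 1) d, lamhat n k ω + τ₁ * q * g n})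
        atTop (nhds 1) := by
  intro q hq hqr
  have hd0 : 0 < d := lt_of_le_of_lt (Nat.zero_le r) hrd
  have hdR : (0:ℝ) < (d:ℝ) := by exact_mod_cast hd0
  set c : ℝ := ((d : ℝ) ^ 2)⁻¹ with hc_def
  have hc : 0 < c := by positivity
  set E : ℕ → Set Ω := fun n => {ω |
      c * ∑ k ∈ Finset.Icc (r + 1) d, lamhat n k ω + τ₁ * r * g n <
      c * ∑ k ∈ Finset.Icc (q + 1) d, lamhat n k ω + τ₁ * q * g n} with hE_def
  have hEmeas : ∀ n, MeasurableSet (E n) := by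
    intro n
    exact measurableSet_lt
      (((Finset.measurable_sum _ fun k _ => hmeas n k).const_mul c).add_const _)
      (((Finset.measurable_sum _ fun k _ => hmeas n k).const_mul c).add_const _)
  have key : Tendsto (fun n => P (E n)ᶜ) atTop (nhds 0) := by
    rw [ENNReal.tendsto_atTop_zero]
    intro ε hε
    obtain ⟨δ, hδ, hδε⟩ := exists_pos_ofReal_le ε hε
    suffices h : ∀ᶠ n in atTop, P (E n)ᶜ ≤ ENNReal.ofReal δ by
      obtain ⟨N, hN⟩ := eventually_atTop.mp h
      exact ⟨N, fun n hn => le_trans (hN n hn) hδε⟩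
    rcases lt_or_gt_of_ne hqr with hlt | hgt
    · -- q < r : the sum ∑_{q+1}^{r} λ̂ₖ converges to a positive constant while g n → 0
      set S : Finset ℕ := Finset.Ioc q r with hS_def
      have hSne : S.Nonempty := Finset.nonempty_Ioc.mpr hlt
      have hMk : ∀ k : ℕ, ∃ M : ℝ, 0 < M ∧ (k ∈ S → ∀ n : ℕ,
          P {ω | M < |Real.sqrt n * (lamhat n k ω - lam k)|}
            ≤ ENNReal.ofReal (δ / S.card)) := by
        intro k
        by_cases hk : k ∈ S
        · obtain ⟨hk1, hk2⟩ := Finset.mem_Ioc.mp hk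
          have hcard : (0:ℝ) < S.card := by
            exact_mod_cast Finset.card_pos.mpr hSne
          obtain ⟨M, hM, hMb⟩ := hroot k (lt_of_le_of_lt (Nat.zero_le q) hk1) hk2
            (δ / S.card) (div_pos hδ hcard)
          exact ⟨M, hM, fun _ => hMb⟩
        · exact ⟨1, one_pos, fun h => absurd h hk⟩
      choose M hMpos hMbound using hMk
      set CM : ℝ := ∑ k ∈ S, M k with hCM_def
      have hCM : 0 ≤ CM := Finset.sum_nonneg fun k _ => (hMpos k).le
      set L : ℝ := ∑ k ∈ S, lam k with hL_def
      have hL : 0 < L := Finset.sum_pos (fun k hk => by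
        obtain ⟨hk1, hk2⟩ := Finset.mem_Ioc.mp hk
        exact hlam_pos k (lt_of_le_of_lt (Nat.zero_le q) hk1) hk2) hSne
      have hev1 : ∀ᶠ n : ℕ in atTop, 2 * CM / L < Real.sqrt n :=
        sqrt_nat_tendsto.eventually_gt_atTop _
      have hev2 : ∀ᶠ n : ℕ in atTop, τ₁ * ((r:ℝ) - q) * g n < c * L / 2 := by
        have h0 : Tendsto (fun n => τ₁ * ((r:ℝ) - q) * g n) atTop (nhds 0) := by
          simpa using hg0.const_mul (τ₁ * ((r:ℝ) - q))
        exact h0.eventually_lt_const (by positivity)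
      filter_upwards [eventually_ge_atTop 1, hev1, hev2] with n hn1 hns hgs
      have hn0 : (0:ℝ) < n := by exact_mod_cast hn1
      have hsn : (0:ℝ) < Real.sqrt n := Real.sqrt_pos.mpr hn0
      apply union_bound P S hSne
        (fun k => {ω | M k < |Real.sqrt n * (lamhat n k ω - lam k)|}) _ ?_ δ
        (fun k hk => hMbound k hk n)
      intro ω hω
      by_contra hcon
      simp only [Set.mem_iUnion, not_exists, Set.mem_setOf_eq, not_lt] at hcon
      apply hω
      -- show ω ∈ E n
      have hklow : ∀ k ∈ S, lam k - M k / Real.sqrt n ≤ lamhat n k ω := by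
        intro k hk
        have h1 : |Real.sqrt n * (lamhat n k ω - lam k)| ≤ M k := hcon k hk
        have h2 : Real.sqrt n * (lam k - lamhat n k ω) ≤ M k := by
          have := neg_abs_le (Real.sqrt n * (lamhat n k ω - lam k))
          nlinarith [abs_nonneg (Real.sqrt n * (lamhat n k ω - lam k))]
        have h3 : lam k - lamhat n k ω ≤ M k / Real.sqrt n := by
          rw [le_div_iff₀ hsn]
          nlinarith
        linarith
      have hsumlow : L - CM / Real.sqrt n ≤ ∑ k ∈ S, lamhat n k ω := by
        have := Finset.sum_le_sum hklow
        rw [Finset.sum_sub_distrib, ← Finset.sum_div] at this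
        exact this
      have hCMs : CM / Real.sqrt n < L / 2 := by
        rw [div_lt_iff₀ hsn]
        have : 2 * CM < L * Real.sqrt n := by
          rw [div_lt_iff₀ hL] at hns
          linarith [hns]
        linarith
      have hbig : τ₁ * ((r:ℝ) - q) * g n < c * ∑ k ∈ S, lamhat n k ω := by
        have h4 : L / 2 < ∑ k ∈ S, lamhat n k ω := by linarith
        nlinarith
      -- now split the sums
      have hsplit : ∑ k ∈ Finset.Icc (q + 1) d, lamhat n k ω =
          ∑ k ∈ S, lamhat n k ω + ∑ k ∈ Finset.Icc (r + 1) d, lamhat n k ω := by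
        rw [Finset.Icc_add_one_left_eq_Ioc, Finset.Icc_add_one_left_eq_Ioc, hS_def,
          Finset.sum_Ioc_consecutive _ hlt.le hrd.le]
      show c * ∑ k ∈ Finset.Icc (r + 1) d, lamhat n k ω + τ₁ * r * g n <
        c * ∑ k ∈ Finset.Icc (q + 1) d, lamhat n k ω + τ₁ * q * g n
      rw [hsplit, mul_add]
      nlinarith [hbig]
    · -- r < q : the sum ∑_{r+1}^{q} λ̂ₖ is O_P(1/n) while n g n → ∞
      set S : Finset ℕ := Finset.Ioc r q with hS_def
      have hSne : S.Nonempty := Finset.nonempty_Ioc.mpr hgt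
      have hMk : ∀ k : ℕ, ∃ M : ℝ, 0 < M ∧ (k ∈ S → ∀ n : ℕ,
          P {ω | M < |(n : ℝ) * lamhat n k ω|}
            ≤ ENNReal.ofReal (δ / S.card)) := by
        intro k
        by_cases hk : k ∈ S
        · obtain ⟨hk1, hk2⟩ := Finset.mem_Ioc.mp hk
          have hcard : (0:ℝ) < S.card := by
            exact_mod_cast Finset.card_pos.mpr hSne
          obtain ⟨M, hM, hMb⟩ := hfast k hk1 (hk2.trans hq.le)
            (δ / S.card) (div_pos hδ hcard)
          exact ⟨M, hM, fun _ => hMb⟩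
        · exact ⟨1, one_pos, fun h => absurd h hk⟩
      choose M hMpos hMbound using hMk
      set CM : ℝ := ∑ k ∈ S, M k with hCM_def
      have hCM : 0 ≤ CM := Finset.sum_nonneg fun k _ => (hMpos k).le
      have hmq : (0:ℝ) < (q:ℝ) - r := by
        have : (r:ℝ) < q := by exact_mod_cast hgt
        linarith
      have hev1 : ∀ᶠ n : ℕ in atTop, c * CM / (τ₁ * ((q:ℝ) - r)) < (n:ℝ) * g n :=
        hng.eventually_gt_atTop _
      filter_upwards [eventually_ge_atTop 1, hev1] with n hn1 hns
      have hn0 : (0:ℝ) < n := by exact_mod_cast hn1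
      apply union_bound P S hSne
        (fun k => {ω | M k < |(n : ℝ) * lamhat n k ω|}) _ ?_ δ
        (fun k hk => hMbound k hk n)
      intro ω hω
      by_contra hcon
      simp only [Set.mem_iUnion, not_exists, Set.mem_setOf_eq, not_lt] at hcon
      apply hω
      have hkup : ∀ k ∈ S, lamhat n k ω ≤ M k / (n:ℝ) := by
        intro k hk
        obtain ⟨hk1, hk2⟩ := Finset.mem_Ioc.mp hk
        have hnn : 0 ≤ lamhat n k ω :=
          hnonneg n k ω (lt_of_le_of_lt (Nat.zero_le r) hk1) (hk2.trans hq.le)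
        have h1 : (n:ℝ) * lamhat n k ω ≤ M k := by
          have := hcon k hk
          rwa [abs_of_nonneg (by positivity)] at this
        rw [le_div_iff₀ hn0]
        linarith
      have hsumup : ∑ k ∈ S, lamhat n k ω ≤ CM / (n:ℝ) := by
        have := Finset.sum_le_sum hkup
        rwa [← Finset.sum_div] at this
      have hsum_nn : 0 ≤ ∑ k ∈ S, lamhat n k ω :=
        Finset.sum_nonneg fun k hk => by
          obtain ⟨hk1, hk2⟩ := Finset.mem_Ioc.mp hk
          exact hnonneg n k ω (lt_of_le_of_lt (Nat.zero_le r) hk1) (hk2.trans hq.le)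
      have hsmall : c * ∑ k ∈ S, lamhat n k ω < τ₁ * ((q:ℝ) - r) * g n := by
        have h1 : c * CM < τ₁ * ((q:ℝ) - r) * ((n:ℝ) * g n) := by
          rw [div_lt_iff₀ (by positivity)] at hns
          nlinarith
        have h2 : c * ∑ k ∈ S, lamhat n k ω ≤ c * CM / n := by
          rw [le_div_iff₀ hn0]
          have h4 : (∑ k ∈ S, lamhat n k ω) * n ≤ CM := (le_div_iff₀ hn0).mp hsumup
          nlinarith [mul_le_mul_of_nonneg_left h4 hc.le]
        have h3 : c * CM / n < τ₁ * ((q:ℝ) - r) * g n := by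
          rw [div_lt_iff₀ hn0]
          nlinarith
        linarith
      have hsplit : ∑ k ∈ Finset.Icc (r + 1) d, lamhat n k ω =
          ∑ k ∈ S, lamhat n k ω + ∑ k ∈ Finset.Icc (q + 1) d, lamhat n k ω := by
        rw [Finset.Icc_add_one_left_eq_Ioc, Finset.Icc_add_one_left_eq_Ioc, hS_def,
          Finset.sum_Ioc_consecutive _ hgt.le hq.le]
      show c * ∑ k ∈ Finset.Icc (r + 1) d, lamhat n k ω + τ₁ * r * g n <
        c * ∑ k ∈ Finset.Icc (q + 1) d, lamhat n k ω + τ₁ * q * g n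
      rw [hsplit, mul_add]
      nlinarith [hsmall]
  -- assemble
  have h1 : ∀ n, P (E n) = 1 - P (E n)ᶜ := by
    intro n
    rw [← compl_compl (E n), prob_compl_eq_one_sub (hEmeas n).compl, compl_compl]
  have h2 : Tendsto (fun n => 1 - P (E n)ᶜ) atTop (nhds 1) := by
    have := ENNReal.Tendsto.sub (tendsto_const_nhds :
      Tendsto (fun _ : ℕ => (1 : ENNReal)) atTop (nhds 1)) key
      (Or.inl ENNReal.one_ne_top)
    simpa using this
  have h3 : (fun n => P (E n)) = fun n => 1 - P (E n)ᶜ := funext h1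
  exact h3 ▸ h2
end

section
/- (Theorem 2 for IC₂.) Let c_* > 0 and define IC₂ⁿ(q) = log(c_* + d⁻² Σ_{k=q+1}^d λ̂ⁿ_k) + τ₂ q g(n) for integers 0 ≤ q ≤ d, where τ₂ > 0. Then for every integer q with 0 ≤ q < d and q ≠ r, P(IC₂ⁿ(r) < IC₂ⁿ(q)) → 1 as n → ∞. -/
open MeasureTheory Filter

lemma helper_tendsto_one {Ω : Type*} [MeasurableSpace Ω] (P : Measure Ω)
    [IsProbabilityMeasure P] (s : ℕ → Set Ω)
    (h : ∀ ε : ℝ, 0 < ε → ∀ᶠ n in atTop, P (s n)ᶜ ≤ ENNReal.ofReal ε) :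
    Tendsto (fun n => P (s n)) atTop (nhds 1) := by
  have hbad : Tendsto (fun n => P (s n)ᶜ) atTop (nhds 0) := by
    rw [ENNReal.tendsto_nhds_zero]
    intro ε hε
    rcases eq_or_ne ε ⊤ with rfl | hne
    · exact Eventually.of_forall fun n => le_top
    · have hε' : 0 < ε.toReal := ENNReal.toReal_pos hε.ne' hne
      filter_upwards [h ε.toReal hε'] with n hn
      rwa [ENNReal.ofReal_toReal hne] at hn
  have hlow : ∀ n, 1 - P (s n)ᶜ ≤ P (s n) := by
    intro n
    rw [tsub_le_iff_right]
    calc (1 : ENNReal) = P Set.univ := measure_univ.symm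
      _ = P (s n ∪ (s n)ᶜ) := by rw [Set.union_compl_self]
      _ ≤ P (s n) + P (s n)ᶜ := measure_union_le _ _
  have h1 : Tendsto (fun n => 1 - P (s n)ᶜ) atTop (nhds 1) := by
    have := ENNReal.Tendsto.sub (tendsto_const_nhds (x := (1 : ENNReal))) hbad
      (Or.inl ENNReal.one_ne_top)
    simpa using this
  exact tendsto_of_tendsto_of_tendsto_of_le_of_le h1 tendsto_const_nhds hlow
    fun n => prob_le_one

lemma log_diff_le {c x t : ℝ} (hc : 0 < c) (hx : 0 ≤ x) (ht : 0 ≤ t) :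
    Real.log (c + x + t) - Real.log (c + x) ≤ t / c := by
  have h1 : 0 < c + x := by linarith
  have h2 : 0 < c + x + t := by linarith
  have hlog := Real.log_le_sub_one_of_pos (div_pos h2 h1)
  rw [Real.log_div h2.ne' h1.ne'] at hlog
  have h3 : (c + x + t) / (c + x) - 1 = t / (c + x) := by field_simp; ring
  have h4 : t / (c + x) ≤ t / c := by gcongr; linarith
  linarith

lemma log_diff_ge {c x t B : ℝ} (hc : 0 < c) (hx : 0 ≤ x) (ht : 0 ≤ t)
    (hB : c + x + t ≤ B) :
    t / B ≤ Real.log (c + x + t) - Real.log (c + x) := by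
  have h1 : 0 < c + x := by linarith
  have h2 : 0 < c + x + t := by linarith
  have hB0 : 0 < B := lt_of_lt_of_le h2 hB
  have hlog := Real.log_le_sub_one_of_pos (div_pos h1 h2)
  rw [Real.log_div h1.ne' h2.ne'] at hlog
  have h5 : 1 - (c + x) / (c + x + t) = t / (c + x + t) := by field_simp; ring
  have h4 : t / B ≤ t / (c + x + t) := by gcongr
  linarith

set_option maxHeartbeats 1000000 in
/-- Theorem 2 for `IC₂`. With
`IC₂ⁿ(q) = log(c_* + d⁻² ∑_{k=q+1}^d λ̂ⁿ_k) + τ₂ q g(n)` for a constant `c_* > 0`,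
for every `0 ≤ q < d` with `q ≠ r`, `P(IC₂ⁿ(r) < IC₂ⁿ(q)) → 1` as `n → ∞`.
(Here the eigenvalue estimators are 1-based: `lamhat n k` for `k ∈ {1, …, d}`.) -/
theorem ic2_consistency
    {Ω : Type*} [MeasurableSpace Ω] (P : Measure Ω) [IsProbabilityMeasure P]
    (r d : ℕ) (hrd : r < d)
    (lam : ℕ → ℝ)
    (hlam_pos : ∀ k, 1 ≤ k → k ≤ r → 0 < lam k)
    (hlam_strict : ∀ k, 1 ≤ k → k < r → lam (k + 1) < lam k)
    (hlam_zero : ∀ k, r < k → k ≤ d → lam k = 0)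
    (lamhat : ℕ → ℕ → Ω → ℝ)
    (hmeas : ∀ n k, Measurable (lamhat n k))
    (hnonneg : ∀ n k ω, 1 ≤ k → k ≤ d → 0 ≤ lamhat n k ω)
    (hroot : ∀ k, 1 ≤ k → k ≤ r →
      BoundedInProb P (fun n ω => Real.sqrt n * (lamhat n k ω - lam k)))
    (hfast : ∀ k, r < k → k ≤ d →
      BoundedInProb P (fun n ω => (n : ℝ) * lamhat n k ω))
    (cstar : ℝ) (hcstar : 0 < cstar)
    (τ₂ : ℝ) (hτ₂ : 0 < τ₂)
    (g : ℕ → ℝ) (hg_pos : ∀ n, 0 < g n)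
    (hg0 : Tendsto g atTop (nhds 0))
    (hng : Tendsto (fun n : ℕ => (n : ℝ) * g n) atTop atTop) :
    ∀ q, q < d → q ≠ r →
      Tendsto
        (fun n => P {ω |
          Real.log (cstar + ((d : ℝ) ^ 2)⁻¹ * ∑ k ∈ Finset.Icc (r + 1) d, lamhat n k ω)
              + τ₂ * r * g n <
          Real.log (cstar + ((d : ℝ) ^ 2)⁻¹ * ∑ k ∈ Finset.Icc (q + 1) d, lamhat n k ω)
              + τ₂ * q * g n})
        atTop (nhds 1) := by
  intro q hqd hqr
  have hd0 : (0 : ℝ) < d := by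
    have : 0 < d := by omega
    exact_mod_cast this
  set a : ℝ := ((d : ℝ) ^ 2)⁻¹ with ha
  have ha0 : 0 < a := by rw [ha]; positivity
  apply helper_tendsto_one
  intro ε hε
  set ε' : ℝ := ε / (d + 1) with hε'def
  have hε' : 0 < ε' := by rw [hε'def]; positivity
  -- choose the bounds M k
  have hW : ∀ k : ℕ, ∃ M : ℝ, 0 < M ∧ (1 ≤ k → k ≤ d → ∀ n : ℕ,
      P {ω | M < |(if k ≤ r then Real.sqrt (n : ℝ) * (lamhat n k ω - lam k)
        else (n : ℝ) * lamhat n k ω)|} ≤ ENNReal.ofReal ε') := by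
    intro k
    by_cases hk1 : 1 ≤ k
    · by_cases hkd : k ≤ d
      · by_cases hkr : k ≤ r
        · obtain ⟨M, hM, hMb⟩ := hroot k hk1 hkr ε' hε'
          exact ⟨M, hM, fun _ _ n => by simpa [hkr] using hMb n⟩
        · obtain ⟨M, hM, hMb⟩ := hfast k (not_le.mp hkr) hkd ε' hε'
          exact ⟨M, hM, fun _ _ n => by simpa [hkr] using hMb n⟩
      · exact ⟨1, one_pos, fun _ h => absurd h hkd⟩
    · exact ⟨1, one_pos, fun h => absurd h hk1⟩
  choose M hMpos hMbound using hW
  -- the union bound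
  have hunion : ∀ n : ℕ, P (⋃ k ∈ Finset.Icc 1 d, {ω | M k <
      |(if k ≤ r then Real.sqrt (n : ℝ) * (lamhat n k ω - lam k)
        else (n : ℝ) * lamhat n k ω)|}) ≤ ENNReal.ofReal ε := by
    intro n
    calc P _ ≤ ∑ k ∈ Finset.Icc 1 d, P {ω | M k <
          |(if k ≤ r then Real.sqrt (n : ℝ) * (lamhat n k ω - lam k)
            else (n : ℝ) * lamhat n k ω)|} := measure_biUnion_finset_le _ _
      _ ≤ ∑ k ∈ Finset.Icc 1 d, ENNReal.ofReal ε' :=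
          Finset.sum_le_sum fun k hk =>
            hMbound k (Finset.mem_Icc.mp hk).1 (Finset.mem_Icc.mp hk).2 n
      _ = (d : ENNReal) * ENNReal.ofReal ε' := by
          rw [Finset.sum_const, Nat.card_Icc]
          simp [nsmul_eq_mul]
      _ ≤ ENNReal.ofReal ε := by
          rw [← ENNReal.ofReal_natCast d, ← ENNReal.ofReal_mul (by positivity)]
          apply ENNReal.ofReal_le_ofReal
          rw [hε'def, mul_div_assoc']
          rw [div_le_iff₀ (by positivity)]
          nlinarith [hε.le]
  rcases lt_or_gt_of_ne hqr with hql | hqg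
  · -- Case q < r : underfitting, penalized by the log term
    have hr1 : 1 ≤ r := by omega
    have hlr : 0 < lam r := hlam_pos r hr1 le_rfl
    set B : ℝ := ∑ k ∈ Finset.Icc 1 d, (lam k + M k) with hB
    have hBterm : ∀ k ∈ Finset.Icc 1 d, 0 ≤ lam k + M k := by
      intro k hk
      rcases Finset.mem_Icc.mp hk with ⟨hk1, hkd⟩
      by_cases hkr : k ≤ r
      · nlinarith [hlam_pos k hk1 hkr, hMpos k]
      · rw [hlam_zero k (not_le.mp hkr) hkd]; simpa using (hMpos k).le
    have hB0 : 0 ≤ B := Finset.sum_nonneg hBterm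
    set δ₀ : ℝ := a * (lam r / 2) / (cstar + a * B) with hδ₀
    have hδ₀pos : 0 < δ₀ := by
      rw [hδ₀]
      apply div_pos (by positivity)
      nlinarith
    have hrq1 : (1 : ℝ) ≤ (r : ℝ) - q := by
      have : q + 1 ≤ r := hql
      have := (Nat.cast_le (α := ℝ)).mpr this
      push_cast at this
      linarith
    have hc0 : 0 < δ₀ / (τ₂ * ((r : ℝ) - q)) := by positivity
    filter_upwards [eventually_ge_atTop 1,
      (tendsto_natCast_atTop_atTop (R := ℝ)).eventually_gt_atTop
        ((2 * M r / lam r) ^ 2),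
      hg0.eventually (gt_mem_nhds hc0)] with n hn1 hsqn hgsm
    refine le_trans (measure_mono ?_) (hunion n)
    intro ω hω
    by_contra hmem
    apply hω
    simp only [Set.mem_iUnion, Set.mem_setOf_eq, not_exists, not_lt] at hmem
    have hn0 : (1 : ℝ) ≤ (n : ℝ) := by exact_mod_cast hn1
    have hsn1 : (1 : ℝ) ≤ Real.sqrt n := by
      rw [show (1 : ℝ) = Real.sqrt 1 by simp]
      exact Real.sqrt_le_sqrt hn0
    have hsn0 : 0 < Real.sqrt n := by linarith
    -- upper bounds for each lamhat
    have hub : ∀ k, 1 ≤ k → k ≤ d → lamhat n k ω ≤ lam k + M k := by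
      intro k hk1 hkd
      have h := hmem k (Finset.mem_Icc.mpr ⟨hk1, hkd⟩)
      by_cases hkr : k ≤ r
      · rw [if_pos hkr] at h
        have h2 : Real.sqrt n * (lamhat n k ω - lam k) ≤ M k :=
          (le_abs_self _).trans h
        rcases le_or_gt (lamhat n k ω) (lam k) with hle | hlt
        · nlinarith [hMpos k]
        · nlinarith
      · rw [if_neg hkr] at h
        have hnn := hnonneg n k ω hk1 hkd
        have h2 : (n : ℝ) * lamhat n k ω ≤ M k := by
          rwa [abs_of_nonneg (by nlinarith)] at h
        rw [hlam_zero k (not_le.mp hkr) hkd]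
        nlinarith
    -- lower bound for lamhat n r
    have hlrb : lam r / 2 ≤ lamhat n r ω := by
      have h := hmem r (Finset.mem_Icc.mpr ⟨hr1, hrd.le⟩)
      rw [if_pos le_rfl] at h
      have h2 : Real.sqrt (n : ℝ) * (lam r - lamhat n r ω) ≤ M r := by
        rcases abs_le.mp h with ⟨hl, _⟩
        nlinarith
      have hsgt : 2 * M r / lam r < Real.sqrt n := by
        rw [show Real.sqrt ((n : ℝ)) = Real.sqrt n from rfl]
        have h0 : (0 : ℝ) ≤ 2 * M r / lam r := by
          apply div_nonneg _ hlr.le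
          nlinarith [hMpos r]
        have := Real.sqrt_lt_sqrt (by positivity) hsqn
        rwa [Real.sqrt_sq h0] at this
      have : 2 * M r < Real.sqrt n * lam r := by
        rw [div_lt_iff₀ hlr] at hsgt; linarith
      nlinarith
    -- sums
    set Sr : ℝ := ∑ k ∈ Finset.Icc (r + 1) d, lamhat n k ω with hSr
    set D : ℝ := ∑ k ∈ Finset.Ioc q r, lamhat n k ω with hD
    have hsplit : (∑ k ∈ Finset.Icc (q + 1) d, lamhat n k ω) = D + Sr := by
      rw [hD, hSr, Finset.Icc_add_one_left_eq_Ioc, Finset.Icc_add_one_left_eq_Ioc]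
      exact (Finset.sum_Ioc_consecutive _ hql.le hrd.le).symm
    have hSr0 : 0 ≤ Sr := by
      apply Finset.sum_nonneg
      intro k hk
      rcases Finset.mem_Icc.mp hk with ⟨h1, h2⟩
      exact hnonneg n k ω (by omega) h2
    have hDge : lam r / 2 ≤ D := by
      refine le_trans hlrb ?_
      apply Finset.single_le_sum (f := fun k => lamhat n k ω)
      · intro k hk
        rcases Finset.mem_Ioc.mp hk with ⟨h1, h2⟩
        exact hnonneg n k ω (by omega) (by omega)
      · exact Finset.mem_Ioc.mpr ⟨hql, le_rfl⟩
    have hSqB : D + Sr ≤ B := by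
      rw [← hsplit, hB]
      calc (∑ k ∈ Finset.Icc (q + 1) d, lamhat n k ω)
          ≤ ∑ k ∈ Finset.Icc (q + 1) d, (lam k + M k) := by
            apply Finset.sum_le_sum
            intro k hk
            rcases Finset.mem_Icc.mp hk with ⟨h1, h2⟩
            exact hub k (by omega) h2
        _ ≤ ∑ k ∈ Finset.Icc 1 d, (lam k + M k) := by
            apply Finset.sum_le_sum_of_subset_of_nonneg
            · apply Finset.Icc_subset_Icc_left; omega
            · intro k hk _; exact hBterm k hk
    have hD0 : 0 ≤ D := by linarith
    have hlog := log_diff_ge (c := cstar) (x := a * Sr) (t := a * D)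
      (B := cstar + a * B) hcstar (by positivity) (by positivity)
      (by nlinarith)
    have hδle : δ₀ ≤ a * D / (cstar + a * B) := by
      rw [hδ₀]
      apply div_le_div_of_nonneg_right ?_ (by nlinarith)
      · nlinarith
    rw [Set.mem_setOf_eq, hsplit]
    have hrw : cstar + a * (D + Sr) = cstar + a * Sr + a * D := by ring
    rw [hrw]
    have hpen : τ₂ * ((r : ℝ) - q) * g n < δ₀ := by
      have h1 : g n < δ₀ / (τ₂ * ((r : ℝ) - q)) := hgsm
      have h2 : 0 < τ₂ * ((r : ℝ) - q) := by nlinarith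
      rw [lt_div_iff₀ h2] at h1
      have e : τ₂ * ((r : ℝ) - q) * g n = g n * (τ₂ * ((r : ℝ) - q)) := by ring
      linarith
    have e : τ₂ * (r : ℝ) * g n - τ₂ * (q : ℝ) * g n
        = τ₂ * ((r : ℝ) - q) * g n := by ring
    linarith [hlog, hδle, hpen]
  · -- Case q > r : overfitting, penalized by the penalty term
    set C : ℝ := (∑ k ∈ Finset.Ioc r q, M k) / (cstar * (d : ℝ) ^ 2 * τ₂) with hC
    filter_upwards [eventually_ge_atTop 1, hng.eventually_gt_atTop C] with n hn1 hnC
    refine le_trans (measure_mono ?_) (hunion n)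
    intro ω hω
    by_contra hmem
    apply hω
    simp only [Set.mem_iUnion, Set.mem_setOf_eq, not_exists, not_lt] at hmem
    have hn0 : (1 : ℝ) ≤ (n : ℝ) := by exact_mod_cast hn1
    have hfk : ∀ k, r < k → k ≤ d → lamhat n k ω ≤ M k / n := by
      intro k hk1 hkd
      have h := hmem k (Finset.mem_Icc.mpr ⟨by omega, hkd⟩)
      rw [if_neg (by omega)] at h
      have hnn := hnonneg n k ω (by omega) hkd
      have h2 : (n : ℝ) * lamhat n k ω ≤ M k := by
        rwa [abs_of_nonneg (by nlinarith)] at h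
      rw [le_div_iff₀ (by linarith)]
      linarith [h2]
    set Sq : ℝ := ∑ k ∈ Finset.Icc (q + 1) d, lamhat n k ω with hSq
    set T : ℝ := ∑ k ∈ Finset.Ioc r q, lamhat n k ω with hT
    have hsplit : (∑ k ∈ Finset.Icc (r + 1) d, lamhat n k ω) = T + Sq := by
      rw [hT, hSq, Finset.Icc_add_one_left_eq_Ioc, Finset.Icc_add_one_left_eq_Ioc]
      exact (Finset.sum_Ioc_consecutive _ hqg.le hqd.le).symm
    have hSq0 : 0 ≤ Sq := by
      apply Finset.sum_nonneg
      intro k hk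
      rcases Finset.mem_Icc.mp hk with ⟨h1, h2⟩
      exact hnonneg n k ω (by omega) h2
    have hT0 : 0 ≤ T := by
      apply Finset.sum_nonneg
      intro k hk
      rcases Finset.mem_Ioc.mp hk with ⟨h1, h2⟩
      exact hnonneg n k ω (by omega) (by omega)
    have hK : 0 < cstar * (d : ℝ) ^ 2 * τ₂ := by positivity
    have hTM : T ≤ (∑ k ∈ Finset.Ioc r q, M k) / n := by
      rw [hT, Finset.sum_div]
      apply Finset.sum_le_sum
      intro k hk
      rcases Finset.mem_Ioc.mp hk with ⟨h1, h2⟩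
      exact hfk k h1 (by omega)
    have hsum : (∑ k ∈ Finset.Ioc r q, M k) = C * (cstar * (d : ℝ) ^ 2 * τ₂) := by
      rw [hC]; field_simp
    have hTlt : T < cstar * (d : ℝ) ^ 2 * τ₂ * g n := by
      have h1 : (∑ k ∈ Finset.Ioc r q, M k) < (n : ℝ) * g n *
          (cstar * (d : ℝ) ^ 2 * τ₂) := by
        rw [hsum]
        exact (mul_lt_mul_of_pos_right hnC hK)
      have h2 : (∑ k ∈ Finset.Ioc r q, M k) / n < g n *
          (cstar * (d : ℝ) ^ 2 * τ₂) := by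
        rw [div_lt_iff₀ (by linarith)]
        nlinarith [h1]
      nlinarith [hTM, h2]
    have hlog := log_diff_le (c := cstar) (x := a * Sq) (t := a * T)
      hcstar (by positivity) (by positivity)
    rw [Set.mem_setOf_eq, hsplit]
    have hrw : cstar + a * (T + Sq) = cstar + a * Sq + a * T := by ring
    rw [hrw]
    have had : a * (d : ℝ) ^ 2 = 1 := by
      rw [ha]; field_simp
    have haT : a * T / cstar < τ₂ * g n := by
      rw [div_lt_iff₀ hcstar]
      calc a * T < a * (cstar * (d : ℝ) ^ 2 * τ₂ * g n) := by
            exact mul_lt_mul_of_pos_left hTlt ha0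
        _ = τ₂ * g n * cstar := by
            have : a * (cstar * (d : ℝ) ^ 2 * τ₂ * g n)
                = (a * (d : ℝ) ^ 2) * (cstar * τ₂ * g n) := by ring
            rw [this, had]; ring
    have hq1 : (r : ℝ) + 1 ≤ (q : ℝ) := by
      have : r + 1 ≤ q := hqg
      exact_mod_cast this
    have e1 : τ₂ * (q : ℝ) * g n - τ₂ * (r : ℝ) * g n
        = τ₂ * g n * ((q : ℝ) - r) := by ring
    have e2 : τ₂ * g n * 1 ≤ τ₂ * g n * ((q : ℝ) - r) := by
      apply mul_le_mul_of_nonneg_left (by linarith) (mul_pos hτ₂ (hg_pos n)).le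
    linarith [hlog, haT]
end

section
/- (Behaviour of eigenvalue ratios.) Assume r ≥ 1 and, almost surely, λ̂ⁿ_k > 0 for all k ≤ r + 1 ≤ d. Then: (i) for every j < r, the ratio λ̂ⁿ_{j+1}/λ̂ⁿ_j converges in probability to λ_{j+1}/λ_j, which is strictly positive; and (ii) λ̂ⁿ_{r+1}/λ̂ⁿ_r converges in probability to 0. -/
open MeasureTheory Filter Topology

lemma tendstoInMeasure_of_boundedInProb {Ω : Type*} [MeasurableSpace Ω] (P : Measure Ω)
    (f : ℕ → Ω → ℝ) (a : ℝ) (c : ℕ → ℝ) (hc0 : ∀ n, 0 ≤ c n)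
    (hc : Tendsto c atTop atTop)
    (hb : BoundedInProb P (fun n ω => c n * (f n ω - a))) :
    TendstoInMeasure P f atTop (fun _ => a) := by
  rw [tendstoInMeasure_iff_dist]
  intro ε hε
  rw [ENNReal.tendsto_nhds_zero]
  intro δ hδ
  obtain ⟨δ', hδ'pos, hδ'le⟩ : ∃ δ' : ℝ, 0 < δ' ∧ ENNReal.ofReal δ' ≤ δ := by
    rcases eq_or_ne δ ⊤ with h | h
    · exact ⟨1, one_pos, by simp [h]⟩
    · exact ⟨δ.toReal, ENNReal.toReal_pos hδ.ne' h, by rw [ENNReal.ofReal_toReal h]⟩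
  obtain ⟨M, hM, hMb⟩ := hb δ' hδ'pos
  filter_upwards [hc.eventually_ge_atTop (M / ε + 1)] with n hn
  refine le_trans (measure_mono ?_) (le_trans (hMb n) hδ'le)
  intro ω hω
  simp only [Set.mem_setOf_eq, Real.dist_eq] at hω ⊢
  rw [abs_mul, abs_of_nonneg (hc0 n)]
  have hcn : M / ε < c n := lt_of_lt_of_le (lt_add_one _) hn
  calc M = (M / ε) * ε := by field_simp
    _ < c n * ε := mul_lt_mul_of_pos_right hcn hε
    _ ≤ c n * |f n ω - a| :=
        mul_le_mul_of_nonneg_left hω (le_of_lt (lt_of_le_of_lt (by positivity) hcn))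

lemma tendstoInMeasure_div_const {Ω : Type*} [MeasurableSpace Ω] (P : Measure Ω)
    (f g : ℕ → Ω → ℝ) (a b : ℝ) (hb : 0 < b)
    (hf : TendstoInMeasure P f atTop (fun _ => a))
    (hg : TendstoInMeasure P g atTop (fun _ => b)) :
    TendstoInMeasure P (fun n ω => f n ω / g n ω) atTop (fun _ => a / b) := by
  rw [tendstoInMeasure_iff_dist] at hf hg ⊢
  intro ε hε
  set δ := min (b / 2) (ε * b ^ 2 / (2 * (b + |a|) + 1)) with hδdef
  have habs : (0:ℝ) ≤ |a| := abs_nonneg a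
  have hδpos : 0 < δ := lt_min (by positivity) (by positivity)
  have hδ1 : δ ≤ b / 2 := min_le_left _ _
  have hδ2 : δ ≤ ε * b ^ 2 / (2 * (b + |a|) + 1) := min_le_right _ _
  have key : ∀ n ω, dist (f n ω) a < δ → dist (g n ω) b < δ →
      dist (f n ω / g n ω) (a / b) < ε := by
    intro n ω h1 h2
    set x := f n ω
    set y := g n ω
    rw [Real.dist_eq] at h1 h2 ⊢
    have hyb : b / 2 < y := by
      have := abs_lt.mp (lt_of_lt_of_le h2 hδ1)
      linarith [this.1]
    have hy0 : (0:ℝ) < y := lt_trans (by positivity) hyb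
    rw [div_sub_div x a hy0.ne' hb.ne', abs_div, abs_of_pos (mul_pos hy0 hb)]
    have hnum : |x * b - y * a| < δ * (b + |a|) := by
      have hrw : x * b - y * a = (x - a) * b + a * (b - y) := by ring
      calc |x * b - y * a| ≤ |x - a| * b + |a| * |b - y| := by
            rw [hrw]
            refine le_trans (abs_add_le _ _) ?_
            rw [abs_mul, abs_mul, abs_of_pos hb]
        _ < δ * b + |a| * δ := by
            have h2' : |b - y| < δ := by rwa [abs_sub_comm]
            have := mul_lt_mul_of_pos_right h1 hb
            rcases eq_or_lt_of_le habs with h | h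
            · rw [← h]; simpa using this
            · exact add_lt_add this (mul_lt_mul_of_pos_left h2' h)
        _ = δ * (b + |a|) := by ring
    have hden : b / 2 * b ≤ y * b := by nlinarith
    rw [div_lt_iff₀ (mul_pos hy0 hb)]
    have hδ2' : δ * (2 * (b + |a|) + 1) ≤ ε * b ^ 2 := by
      rw [← le_div_iff₀ (by positivity)]; exact hδ2
    nlinarith
  have hsub : ∀ n, {ω | ε ≤ dist (f n ω / g n ω) (a / b)} ⊆
      {ω | δ ≤ dist (f n ω) a} ∪ {ω | δ ≤ dist (g n ω) b} := by
    intro n ω hω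
    by_contra h
    simp only [Set.mem_union, Set.mem_setOf_eq, not_or, not_le] at h
    exact absurd hω (not_le.mpr (key n ω h.1 h.2))
  have hsum : Tendsto (fun n => P {ω | δ ≤ dist (f n ω) a} + P {ω | δ ≤ dist (g n ω) b})
      atTop (𝓝 0) := by
    have := (hf δ hδpos).add (hg δ hδpos)
    simpa using this
  refine tendsto_of_tendsto_of_tendsto_of_le_of_le tendsto_const_nhds hsum
    (fun n => zero_le) (fun n => ?_)
  exact le_trans (measure_mono (hsub n)) (measure_union_le _ _)

/-- behaviour of eigenvalue ratios. Assume `r ≥ 1`, `r + 1 ≤ d` and,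
almost surely, `λ̂ⁿ_k > 0` for all `k ≤ r + 1`. Then:
(i) for every `1 ≤ j < r`, the ratio `λ̂ⁿ_{j+1}/λ̂ⁿ_j` converges in probability to
`λ_{j+1}/λ_j`, which is strictly positive; and
(ii) `λ̂ⁿ_{r+1}/λ̂ⁿ_r` converges in probability to `0`.
(Here the eigenvalue estimators are 1-based: `lamhat n k` for `k ∈ {1, …, d}`.) -/
theorem eigenvalue_ratio_behaviour
    {Ω : Type*} [MeasurableSpace Ω] (P : Measure Ω) [IsProbabilityMeasure P]
    (r d : ℕ) (hr : 1 ≤ r) (hrd : r < d)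
    (lam : ℕ → ℝ)
    (hlam_pos : ∀ k, 1 ≤ k → k ≤ r → 0 < lam k)
    (hlam_strict : ∀ k, 1 ≤ k → k < r → lam (k + 1) < lam k)
    (hlam_zero : ∀ k, r < k → k ≤ d → lam k = 0)
    (lamhat : ℕ → ℕ → Ω → ℝ)
    (hmeas : ∀ n k, Measurable (lamhat n k))
    (hnonneg : ∀ n k ω, 1 ≤ k → k ≤ d → 0 ≤ lamhat n k ω)
    (hpos : ∀ n, ∀ᵐ ω ∂P, ∀ k, 1 ≤ k → k ≤ r + 1 → 0 < lamhat n k ω)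
    (hroot : ∀ k, 1 ≤ k → k ≤ r →
      BoundedInProb P (fun n ω => Real.sqrt n * (lamhat n k ω - lam k)))
    (hfast : ∀ k, r < k → k ≤ d →
      BoundedInProb P (fun n ω => (n : ℝ) * lamhat n k ω)) :
    (∀ j, 1 ≤ j → j < r →
        0 < lam (j + 1) / lam j ∧
        TendstoInMeasure P (fun n ω => lamhat n (j + 1) ω / lamhat n j ω) atTop
          (fun _ => lam (j + 1) / lam j)) ∧
    TendstoInMeasure P (fun n ω => lamhat n (r + 1) ω / lamhat n r ω) atTop
      (fun _ => (0 : ℝ)) := by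
  have hsqrt : Tendsto (fun n : ℕ => Real.sqrt n) atTop atTop := by
    rw [tendsto_atTop_atTop]
    intro b
    refine ⟨⌈b ^ 2⌉₊, fun n hn => ?_⟩
    have hb2 : b ^ 2 ≤ (n : ℝ) :=
      le_trans (Nat.le_ceil _) (Nat.cast_le.mpr hn)
    calc b ≤ |b| := le_abs_self b
      _ = Real.sqrt (b ^ 2) := (Real.sqrt_sq_eq_abs b).symm
      _ ≤ Real.sqrt n := Real.sqrt_le_sqrt hb2
  have hconv : ∀ k, 1 ≤ k → k ≤ r →
      TendstoInMeasure P (fun n ω => lamhat n k ω) atTop (fun _ => lam k) := by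
    intro k hk1 hkr
    exact tendstoInMeasure_of_boundedInProb P _ _ _ (fun n => Real.sqrt_nonneg _)
      hsqrt (hroot k hk1 hkr)
  have hconv0 : TendstoInMeasure P (fun n ω => lamhat n (r + 1) ω) atTop (fun _ => 0) := by
    refine tendstoInMeasure_of_boundedInProb P _ _ (fun n => (n : ℝ))
      (fun n => Nat.cast_nonneg n) tendsto_natCast_atTop_atTop ?_
    simpa using hfast (r + 1) (Nat.lt_succ_self r) hrd
  constructor
  · intro j hj1 hjr
    have hj1r : j + 1 ≤ r := hjr
    have hpj : 0 < lam j := hlam_pos j hj1 (le_of_lt hjr)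
    have hpj1 : 0 < lam (j + 1) := hlam_pos (j + 1) (le_trans hj1 (Nat.le_succ j)) hj1r
    refine ⟨div_pos hpj1 hpj, ?_⟩
    exact tendstoInMeasure_div_const P _ _ _ _ hpj
      (hconv (j + 1) (le_trans hj1 (Nat.le_succ j)) hj1r) (hconv j hj1 (le_of_lt hjr))
  · have := tendstoInMeasure_div_const P _ _ 0 (lam r) (hlam_pos r hr le_rfl)
      hconv0 (hconv r hr le_rfl)
    simpa using this
end
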